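/- Fix α ∈ [0,1), a constant C > 0, and λ > 0. Suppose k, l ∈ ℤ^n satisfy, for every j = 1,…,n: λ⟨l⟩^{α/(1−α)}(l_j − C) < ⟨k⟩^{α/(1−α)}(k_j + C) and λ⟨l⟩^{α/(1−α)}(l_j + C) > ⟨k⟩^{α/(1−α)}(k_j − C). Then there is a constant M = M(n, α, C) ≥ 1 such that if ⟨l⟩ ≥ M·(1 ∨ λ^{−(1−α)}), then (1/M) λ^{1−α} ⟨l⟩ ≤ ⟨k⟩ ≤ M λ^{1−α} ⟨l⟩. -/

import Mathlib

/-!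
With `β = α/(1-α)`, put `A = ⟨k⟩^β` and `B = λ⟨l⟩^β`. The hypotheses say `|A k_j - B l_j| ≤ C(A+B)`
for every `j`; passing to the Euclidean norm and absorbing the `1` inside the bracket gives
`|A⟨k⟩ - B⟨l⟩| ≤ K(A+B)` with `K = √n C + 1`. Since `(1-α)(β+1) = 1`, this reads
`|⟨k⟩^q - y^q| ≤ K(A+B)` with `q = β+1` and `y = λ^{1-α}⟨l⟩`. The threshold makes both `⟨l⟩` and
`y` at least `4K`, so `K B ≤ y^q/4`, while `K A ≤ K⟨k⟩^q`, and `K A ≤ ⟨k⟩^q/4` once `⟨k⟩ ≥ y`.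
Hence `⟨k⟩^q` and `y^q` agree up to the factor `M = 4K`, which survives taking `q`-th roots.
-/

open Real

noncomputable def jbracket {n : ℕ} (k : Fin n → ℤ) : ℝ :=
  Real.sqrt (1 + ∑ i, ((k i : ℝ)) ^ 2)

theorem EuclideanSpace.norm_le_sqrt_card_mul {ι : Type*} [Fintype ι] (v : EuclideanSpace ℝ ι)
    {D : ℝ} (hD : 0 ≤ D) (h : ∀ i, |v i| ≤ D) : ‖v‖ ≤ √(Fintype.card ι) * D := by
  rw [EuclideanSpace.norm_eq, ← Real.sqrt_sq hD, ← Real.sqrt_mul (Nat.cast_nonneg _)]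
  gcongr
  calc ∑ i, ‖v i‖ ^ 2 ≤ ∑ _i : ι, D ^ 2 := by
        gcongr with i
        exact (Real.norm_eq_abs _).trans_le (h i)
  _ = Fintype.card ι * D ^ 2 := by simp

noncomputable def latticeVector {n : ℕ} (k : Fin n → ℤ) : EuclideanSpace ℝ (Fin n) :=
  WithLp.toLp 2 fun i => (k i : ℝ)

theorem jbracket_eq_sqrt {n : ℕ} (k : Fin n → ℤ) :
    jbracket k = √(1 + ‖latticeVector k‖ ^ 2) := by
  simp [jbracket, latticeVector, EuclideanSpace.norm_sq_eq]

theorem norm_latticeVector_le_jbracket {n : ℕ} (k : Fin n → ℤ) :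
    ‖latticeVector k‖ ≤ jbracket k := by
  rw [jbracket_eq_sqrt]
  exact Real.le_sqrt_of_sq_le (by linarith)

theorem jbracket_le_norm_latticeVector_add_one {n : ℕ} (k : Fin n → ℤ) :
    jbracket k ≤ ‖latticeVector k‖ + 1 := by
  rw [jbracket_eq_sqrt]
  exact Real.sqrt_le_iff.2 ⟨by positivity, by nlinarith [norm_nonneg (latticeVector k)]⟩

theorem one_le_jbracket {n : ℕ} (k : Fin n → ℤ) : 1 ≤ jbracket k := by
  rw [jbracket_eq_sqrt]
  exact Real.le_sqrt_of_sq_le (by nlinarith [norm_nonneg (latticeVector k)])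

theorem abs_mul_jbracket_sub_mul_jbracket_le {n : ℕ} {a b D : ℝ} (ha : 0 ≤ a) (hb : 0 ≤ b)
    (hD : 0 ≤ D) (k l : Fin n → ℤ) (h : ∀ j, |a * k j - b * l j| ≤ D) :
    |a * jbracket k - b * jbracket l| ≤ √n * D + a + b := by
  have hvec : ‖a • latticeVector k - b • latticeVector l‖ ≤ √n * D := by
    simpa using EuclideanSpace.norm_le_sqrt_card_mul (a • latticeVector k - b • latticeVector l) hD
      fun j => by simpa [latticeVector] using h j
  have hnorm : |a * ‖latticeVector k‖ - b * ‖latticeVector l‖| ≤ √n * D := by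
    rw [← norm_smul_of_nonneg ha, ← norm_smul_of_nonneg hb]
    exact (abs_norm_sub_norm_le _ _).trans hvec
  have hk₁ := mul_le_mul_of_nonneg_left (norm_latticeVector_le_jbracket k) ha
  have hk₂ := mul_le_mul_of_nonneg_left (jbracket_le_norm_latticeVector_add_one k) ha
  have hl₁ := mul_le_mul_of_nonneg_left (norm_latticeVector_le_jbracket l) hb
  have hl₂ := mul_le_mul_of_nonneg_left (jbracket_le_norm_latticeVector_add_one l) hb
  rw [abs_le] at hnorm ⊢
  constructor <;> nlinarith

theorem le_four_mul_of_abs_sub_le {K a b x z : ℝ} (hK : 1 ≤ K) (ha : 0 ≤ a) (hb : 0 ≤ b)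
    (hx : 1 ≤ x) (hz : 4 * K ≤ z) (h : |a * x - b * z| ≤ K * (a + b)) :
    b * z ≤ 4 * K * (a * x) := by
  have hax : K * a ≤ K * (a * x) := by gcongr; exact le_mul_of_one_le_right ha hx
  have hbz : 4 * K * b ≤ b * z := by nlinarith
  have hax0 : 0 ≤ a * x := by positivity
  nlinarith [(abs_le.1 h).1]

theorem le_mul_of_rpow_le_mul_rpow {u v c q : ℝ} (hv : 0 ≤ v) (hc : 1 ≤ c)
    (hq : 1 ≤ q) (h : u ^ q ≤ c * v ^ q) : u ≤ c * v := by
  by_contra! hlt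
  have : (c * v) ^ q < u ^ q := Real.rpow_lt_rpow (by positivity) hlt (by linarith)
  rw [Real.mul_rpow (by linarith) hv] at this
  have := Real.self_le_rpow_of_one_le hc hq
  nlinarith [Real.rpow_nonneg hv q]

theorem le_and_le_rpow_mul_of_mul_max_le {M lam p z : ℝ} (hM : 0 ≤ M) (hlam : 0 < lam)
    (h : M * max 1 (lam ^ (-p)) ≤ z) : M ≤ z ∧ M ≤ lam ^ p * z := by
  refine ⟨(le_mul_of_one_le_right hM (le_max_left _ _)).trans h, ?_⟩
  have := (mul_le_mul_of_nonneg_left (le_max_right _ _) hM).trans h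
  rwa [Real.rpow_neg hlam.le, ← div_eq_mul_inv, div_le_iff₀ (by positivity), mul_comm] at this

theorem rpow_mul_rpow_add_one {α lam z : ℝ} (hα : α < 1) (hlam : 0 ≤ lam) (hz : 0 ≤ z) :
    (lam ^ (1 - α) * z) ^ (α / (1 - α) + 1) = lam * z ^ (α / (1 - α) + 1) := by
  have hexp : (1 - α) * (α / (1 - α) + 1) = 1 := by
    rw [mul_add, mul_div_cancel₀ _ (sub_ne_zero.2 hα.ne')]; ring
  rw [Real.mul_rpow (by positivity) hz, ← Real.rpow_mul hlam, hexp, Real.rpow_one]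

theorem comparable_of_abs_rpow_sub_le {K q a b x y z : ℝ} (hK : 1 ≤ K) (hq : 1 ≤ q)
    (ha : 0 ≤ a) (hb : 0 ≤ b) (hx : 1 ≤ x) (hy : 4 * K ≤ y) (hz : 4 * K ≤ z)
    (hax : a * x = x ^ q) (hbz : b * z = y ^ q) (h : |a * x - b * z| ≤ K * (a + b)) :
    y ≤ 4 * K * x ∧ x ≤ 4 * K * y := by
  have hK4 : 1 ≤ 4 * K := by linarith
  constructor
  · have := le_four_mul_of_abs_sub_le hK ha hb hx hz h
    rw [hax, hbz] at this
    exact le_mul_of_rpow_le_mul_rpow (by linarith) hK4 hq this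
  · rcases le_or_gt x y with hxy | hyx
    · exact hxy.trans (le_mul_of_one_le_left (by linarith) hK4)
    rw [abs_sub_comm, add_comm] at h
    have := le_four_mul_of_abs_sub_le hK hb ha (by linarith) (hy.trans hyx.le) h
    rw [hax, hbz] at this
    exact le_mul_of_rpow_le_mul_rpow (by linarith) hK4 hq this

/-- If the λ-dilated symbol `(η_k^α)_λ` and `η_l^α` have overlapping supports
(expressed by the coordinatewise inequalities), then for `⟨l⟩` large compared
with `1 ∨ λ^{−(1−α)}` one has `⟨k⟩ ∼ λ^{1−α}⟨l⟩`, with a constant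
`M = M(n, α, C)`. -/
theorem dilated_overlap_comparable (n : ℕ) (α : ℝ) (hα0 : 0 ≤ α) (hα1 : α < 1)
    (C : ℝ) (hC : 0 < C) :
    ∃ M : ℝ, 1 ≤ M ∧
      ∀ (lam : ℝ), 0 < lam → ∀ k l : Fin n → ℤ,
        (∀ j, lam * (jbracket l ^ (α / (1 - α)) * ((l j : ℝ) - C))
            < jbracket k ^ (α / (1 - α)) * ((k j : ℝ) + C)) →
        (∀ j, lam * (jbracket l ^ (α / (1 - α)) * ((l j : ℝ) + C))
            > jbracket k ^ (α / (1 - α)) * ((k j : ℝ) - C)) →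
        M * max 1 (lam ^ (-(1 - α))) ≤ jbracket l →
        (1 / M) * (lam ^ (1 - α) * jbracket l) ≤ jbracket k ∧
          jbracket k ≤ M * (lam ^ (1 - α) * jbracket l) := by
  set β := α / (1 - α)
  set K := √n * C + 1
  have hK : 1 ≤ K := le_add_of_nonneg_left (by positivity)
  refine ⟨4 * K, by linarith, fun lam hlam k l hlt hgt hthr => ?_⟩
  set x := jbracket k
  set z := jbracket l
  obtain ⟨hz, hy⟩ := le_and_le_rpow_mul_of_mul_max_le (by linarith) hlam hthr
  have hx0 : 0 < x := zero_lt_one.trans_le (one_le_jbracket k)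
  have hz0 : 0 < z := by linarith
  have ha : 0 ≤ x ^ β := Real.rpow_nonneg hx0.le β
  have hb : 0 ≤ lam * z ^ β := mul_nonneg hlam.le (Real.rpow_nonneg hz0.le β)
  have hkey : |x ^ β * x - lam * z ^ β * z| ≤ K * (x ^ β + lam * z ^ β) := by
    refine (abs_mul_jbracket_sub_mul_jbracket_le (D := C * (x ^ β + lam * z ^ β)) ha hb
      (by positivity) k l fun j => abs_le.2 ⟨?_, ?_⟩).trans (le_of_eq (by ring))
    · linarith [hlt j]
    · linarith [hgt j]
  have hY : lam * z ^ β * z = (lam ^ (1 - α) * z) ^ (β + 1) := by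
    rw [mul_assoc, ← Real.rpow_add_one hz0.ne', rpow_mul_rpow_add_one hα1 hlam.le hz0.le]
  obtain ⟨hlower, hupper⟩ := comparable_of_abs_rpow_sub_le hK
    (le_add_of_nonneg_left (div_nonneg hα0 (sub_nonneg.2 hα1.le))) ha hb (one_le_jbracket k) hy hz
    (Real.rpow_add_one hx0.ne' β).symm hY hkey
  refine ⟨?_, hupper⟩
  rw [one_div_mul_eq_div, div_le_iff₀ (by linarith)]
  linarith
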